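/- arXiv:2312.04725 — 4 statements merged into one kernel-verified Lean document; each statement's English description precedes it below -/
import Mathlib

section
/- Let X_1, ..., X_d be complex numbers with |X_1| + ... + |X_d| < 1 and let s be a complex number. Then (1 + X_1 + ... + X_d)^{-s} = Σ over multi-indices k = (k_1,...,k_d) ∈ ℕ_0^d of binom(-s, |k|) · multinomial(|k|; k) · X_1^{k_1} ⋯ X_d^{k_d}, where |k| = k_1 + ... + k_d. -/
/-!
Grouping the terms by total degree `|k| = n`, the multinomial theorem collapses each group to
`binom(-s, n) (X_1 + ⋯ + X_d)^n`, so the sum is the binomial series of `(1 + z)^{-s}` at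
`z = X_1 + ⋯ + X_d`. The same grouping applied to the absolute values of the terms gives the
binomial series with coefficients `|binom(-s, n)|` at `r = |X_1| + ⋯ + |X_d| < 1`, which converges
because that series has radius of convergence at least `1`; this absolute convergence is what
justifies the regrouping.
-/

open Finset

/-- Generalized binomial coefficient `binom(s, n) = s(s-1)⋯(s-n+1)/n!` for complex `s`. -/
noncomputable def cbinom (s : ℂ) (n : ℕ) : ℂ :=
  (∏ i ∈ Finset.range n, (s - i)) / (n.factorial : ℂ)

theorem cbinom_eq_choose (s : ℂ) (n : ℕ) : cbinom s n = Ring.choose s n := by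
  rw [cbinom, Ring.choose_eq_smul, ← Polynomial.aeval_eq_smeval, Polynomial.aeval_def,
    ← Polynomial.eval_map, descPochhammer_map, descPochhammer_eval_eq_prod_range]
  simp [div_eq_inv_mul]

theorem hasSum_cbinom_mul_pow (s : ℂ) {z : ℂ} (hz : ‖z‖ < 1) :
    HasSum (fun n ↦ cbinom s n * z ^ n) ((1 + z) ^ s) := by
  have := (Complex.one_add_cpow_hasFPowerSeriesOnBall_zero (a := s)).hasSum (y := z)
    (by simpa [← ofReal_norm] using hz)
  simpa [cbinom_eq_choose, binomialSeries, mul_comm] using this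

theorem summable_norm_cbinom_mul_pow (s : ℂ) {r : ℝ} (hr₀ : 0 ≤ r) (hr : r < 1) :
    Summable (fun n ↦ ‖cbinom s n‖ * r ^ n) := by
  lift r to NNReal using hr₀
  have := (binomialSeries ℂ s).summable_norm_mul_pow
    ((ENNReal.coe_lt_one_iff.mpr hr).trans_le binomialSeries_radius_ge_one)
  simpa [cbinom_eq_choose, binomialSeries] using this

section MultinomialSeries

variable {ι : Type*} [Fintype ι]

def multinomialTerm {R : Type*} [CommSemiring R] (c : ℕ → R) (X : ι → R) (k : ι → ℕ) : R :=
  c (∑ i, k i) * (Nat.multinomial univ k : R) * ∏ i, X i ^ k i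

theorem sum_piAntidiag_multinomialTerm [DecidableEq ι] {R : Type*} [CommSemiring R]
    (c : ℕ → R) (X : ι → R) (n : ℕ) :
    ∑ k ∈ piAntidiag univ n, multinomialTerm c X k = c n * (∑ i, X i) ^ n := by
  rw [sum_pow_eq_sum_piAntidiag, mul_sum]
  refine sum_congr rfl fun k hk ↦ ?_
  rw [multinomialTerm, (mem_piAntidiag.mp hk).1, mul_assoc]

theorem norm_multinomialTerm {𝕜 : Type*} [RCLike 𝕜] (c : ℕ → 𝕜) (X : ι → 𝕜) (k : ι → ℕ) :
    ‖multinomialTerm c X k‖ = multinomialTerm (‖c ·‖) (‖X ·‖) k := by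
  simp only [multinomialTerm, norm_mul, norm_prod, norm_pow, RCLike.norm_natCast]

theorem multinomialTerm_nonneg {c : ℕ → ℝ} {X : ι → ℝ} (hc : 0 ≤ c) (hX : 0 ≤ X) :
    0 ≤ multinomialTerm c X := fun k ↦
  mul_nonneg (mul_nonneg (hc _) (Nat.multinomial univ k).cast_nonneg)
    (prod_nonneg fun i _ ↦ pow_nonneg (hX i) _)

variable [DecidableEq ι]

theorem coe_piAntidiag_univ_eq_preimage (n : ℕ) :
    ((piAntidiag univ n : Finset (ι → ℕ)) : Set (ι → ℕ)) = (fun k ↦ ∑ i, k i) ⁻¹' {n} := by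
  ext k
  simp

theorem summable_of_summable_sum_piAntidiag {f : (ι → ℕ) → ℝ} (hf : 0 ≤ f)
    (h : Summable fun n ↦ ∑ k ∈ piAntidiag univ n, f k) : Summable f := by
  refine (summable_partition hf (s := fun n ↦ ↑(piAntidiag univ n : Finset (ι → ℕ)))
    fun k ↦ ?_).mpr ⟨fun n ↦ .of_finite, by simpa only [Finset.tsum_subtype'] using h⟩
  simp [coe_piAntidiag_univ_eq_preimage]

theorem HasSum.of_sum_piAntidiag {E : Type*} [AddCommGroup E] [UniformSpace E]
    [IsUniformAddGroup E] [CompleteSpace E] [T2Space E] {f : (ι → ℕ) → E} {a : E}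
    (h : HasSum (fun n ↦ ∑ k ∈ piAntidiag univ n, f k) a) (hf : Summable f) : HasSum f a := by
  have hfiber : HasSum (fun n ↦ ∑ k ∈ piAntidiag univ n, f k) (∑' k, f k) := by
    convert hf.hasSum.tsum_fiberwise (fun k ↦ ∑ i, k i) with n
    rw [← coe_piAntidiag_univ_eq_preimage, Finset.tsum_subtype']
  exact hf.hasSum_iff.mpr (hfiber.unique h)

end MultinomialSeries

/-- Multinomial expansion of `(1 + X_1 + ... + X_d)^{-s}` for `|X_1| + ... + |X_d| < 1`:
the series over multi-indices `k ∈ ℕ^d` of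
`binom(-s,|k|) · multinomial(|k|;k) · X_1^{k_1}⋯X_d^{k_d}` converges absolutely to it. -/
theorem cpow_neg_eq_tsum_multinomial (d : ℕ) (X : Fin d → ℂ)
    (hX : (∑ i, ‖X i‖) < 1) (s : ℂ) :
    Summable (fun k : Fin d → ℕ =>
      ‖cbinom (-s) (∑ i, k i) * (Nat.multinomial Finset.univ k : ℂ) * ∏ i, X i ^ k i‖) ∧
    HasSum (fun k : Fin d → ℕ =>
        cbinom (-s) (∑ i, k i) * (Nat.multinomial Finset.univ k : ℂ) * ∏ i, X i ^ k i)
      ((1 + ∑ i, X i) ^ (-s)) := by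
  change Summable (fun k ↦ ‖multinomialTerm (cbinom (-s)) X k‖) ∧
    HasSum (multinomialTerm (cbinom (-s)) X) _
  have hnorm_summable : Summable (fun k ↦ ‖multinomialTerm (cbinom (-s)) X k‖) := by
    simp only [norm_multinomialTerm]
    refine summable_of_summable_sum_piAntidiag
      (multinomialTerm_nonneg (fun _ ↦ norm_nonneg _) (fun _ ↦ norm_nonneg _)) ?_
    simp only [sum_piAntidiag_multinomialTerm]
    exact summable_norm_cbinom_mul_pow (-s) (by positivity) hX
  refine ⟨hnorm_summable, .of_sum_piAntidiag ?_ hnorm_summable.of_norm⟩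
  simp only [sum_piAntidiag_multinomialTerm]
  exact hasSum_cbinom_mul_pow (-s) ((norm_sum_le _ _).trans_lt hX)
end

section
/- Let θ > 0 be a real number, ν a complex number with Re(ν) > 0, and s = σ + iτ a complex number. Then |∫_θ^∞ e^{-νy} y^{s-1} dy| ≤ 2^σ e^{-Re(ν)θ/2} ∫_{θ/2}^∞ e^{-Re(ν)y} y^{σ-1} dy. -/
/-! Substituting `y = 2x` turns the integral into `2 ∫_{θ/2}^∞ e^{-2νx} (2x)^{s-1} dx`; on `x > θ/2`
one factor `e^{-Re(ν) x}` of `|e^{-2νx}| = e^{-Re(ν) x} e^{-Re(ν) x}` is at most `e^{-Re(ν) θ/2}`,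
and `(2x)^{σ-1} = 2^{σ-1} x^{σ-1}`. -/

open MeasureTheory

open Real in
lemma integrableOn_exp_neg_mul_mul_rpow_Ioi {a : ℝ} (ha : 0 < a) (c : ℝ) {t : ℝ} (ht : 0 < t) :
    IntegrableOn (fun x ↦ exp (-a * x) * x ^ c) (Set.Ioi t) := by
  refine integrable_of_isBigO_exp_neg (half_pos ha) ?_ ?_
  · refine ((continuous_exp.comp (continuous_const.mul continuous_id)).continuousOn).mul ?_
    exact continuousOn_id.rpow_const fun x hx ↦ Or.inl (ht.trans_le hx).ne'
  · have hpow := (isLittleO_rpow_exp_pos_mul_atTop c (half_pos ha)).isBigO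
    refine ((Asymptotics.isBigO_refl (fun x ↦ exp (-a * x)) _).mul hpow).congr_right fun x ↦ ?_
    rw [← exp_add]
    ring_nf

lemma Complex.norm_exp_mul_mul_cpow (z w : ℂ) {x : ℝ} (hx : 0 < x) :
    ‖exp (z * x) * (x : ℂ) ^ w‖ = Real.exp (z.re * x) * x ^ w.re := by
  rw [norm_mul, norm_exp, norm_cpow_eq_rpow_re_of_pos hx, re_mul_ofReal]

lemma norm_cexp_neg_mul_two_mul_mul_cpow_le {ν : ℂ} (hν : 0 ≤ ν.re) {t x : ℝ} (hx : 0 < x)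
    (htx : t ≤ x) (w : ℂ) :
    ‖Complex.exp (-ν * ↑(2 * x)) * (↑(2 * x) : ℂ) ^ w‖ ≤
      2 ^ w.re * Real.exp (-ν.re * t) * (Real.exp (-ν.re * x) * x ^ w.re) := by
  rw [Complex.norm_exp_mul_mul_cpow _ _ (mul_pos two_pos hx), Complex.neg_re]
  have hexp : Real.exp (-ν.re * x) ≤ Real.exp (-ν.re * t) := Real.exp_le_exp.mpr (by nlinarith)
  calc Real.exp (-ν.re * (2 * x)) * (2 * x) ^ w.re
      = 2 ^ w.re * Real.exp (-ν.re * x) * (Real.exp (-ν.re * x) * x ^ w.re) := by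
        rw [Real.mul_rpow zero_le_two hx.le, show -ν.re * (2 * x) = -ν.re * x + -ν.re * x by ring,
          Real.exp_add]
        ring
    _ ≤ 2 ^ w.re * Real.exp (-ν.re * t) * (Real.exp (-ν.re * x) * x ^ w.re) := by gcongr

/-- Bound for the generalized incomplete Gamma function:
`|Γ(s,θ,ν)| ≤ 2^σ e^{-Re(ν)θ/2} Γ(σ, θ/2, Re ν)` for `θ > 0`, `Re ν > 0`, `s = σ + iτ`. -/
theorem norm_incompleteGamma_le (θ : ℝ) (hθ : 0 < θ) (ν : ℂ) (hν : 0 < ν.re) (s : ℂ) :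
    ‖∫ y in Set.Ioi θ, Complex.exp (-ν * y) * (y : ℂ) ^ (s - 1)‖ ≤
      (2 : ℝ) ^ s.re * Real.exp (-ν.re * θ / 2) *
        ∫ y in Set.Ioi (θ / 2), Real.exp (-ν.re * y) * y ^ (s.re - 1) := by
  have hsubst := integral_comp_mul_left_Ioi' (fun y : ℝ ↦ Complex.exp (-ν * y) * (y : ℂ) ^ (s - 1))
    (θ / 2) two_pos
  rw [mul_div_cancel₀ θ two_ne_zero] at hsubst
  have hint := (integrableOn_exp_neg_mul_mul_rpow_Ioi hν (s.re - 1) (half_pos hθ)).const_mul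
    (2 ^ (s.re - 1) * Real.exp (-ν.re * (θ / 2)))
  calc ‖∫ y in Set.Ioi θ, Complex.exp (-ν * y) * (y : ℂ) ^ (s - 1)‖
      = 2 * ‖∫ x in Set.Ioi (θ / 2), Complex.exp (-ν * ↑(2 * x)) * (↑(2 * x) : ℂ) ^ (s - 1)‖ := by
        rw [← hsubst, norm_smul, Real.norm_ofNat]
    _ ≤ 2 * ∫ x in Set.Ioi (θ / 2),
          2 ^ (s.re - 1) * Real.exp (-ν.re * (θ / 2)) * (Real.exp (-ν.re * x) * x ^ (s.re - 1)) := by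
        refine mul_le_mul_of_nonneg_left (norm_integral_le_of_norm_le hint ?_) zero_le_two
        filter_upwards [ae_restrict_mem measurableSet_Ioi] with x (hx : θ / 2 < x)
        exact norm_cexp_neg_mul_two_mul_mul_cpow_le hν.le ((half_pos hθ).trans hx) hx.le (s - 1)
    _ = _ := by
        rw [integral_const_mul, Real.rpow_sub_one two_ne_zero]
        ring_nf
end

section
/- Let a, c be complex numbers with positive real part, b a nonnegative integer, and set g(s) = 1/(Γ(as - b) · cs). Then g extends holomorphically near s = 0 with g(0) = (a/c)·(-1)^b·b! and g'(0) = (a²/c)·(-1)^b·b!·(γ - h_b), where γ is the Euler–Mascheroni constant and h_b = Σ_{k=1}^b 1/k is the b-th harmonic number. -/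
/-!
Iterating `1/Γ(z) = z/Γ(z + 1)`, valid for every `z` including the poles of `Γ`, gives
`1/Γ(w - b) = w (w - 1) ⋯ (w - b) / Γ(w + 1)`. Dividing by `w` leaves the entire function
`F(w) = (w - 1) ⋯ (w - b) / Γ(w + 1)`, and `g(s) = (a/c) F(as)`. Then `F(0) = (-1)^b b!`, and
`F'(0) = F(0) (γ - h_b)` because the product has logarithmic derivative `-h_b` at `0` while
`1/Γ(w + 1)` has derivative `γ` there.
-/

open Complex Finset Nat

lemma inv_Gamma_sub_natCast (w : ℂ) (n : ℕ) :
    (Gamma (w - n))⁻¹ = (∏ k ∈ range n, (w - (k + 1))) * (Gamma w)⁻¹ := by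
  induction n generalizing w with
  | zero => simp
  | succ n ih =>
    rw [cast_succ, show w - (n + 1) = (w - 1) - n by ring, ih,
      one_div_Gamma_eq_self_mul_one_div_Gamma_add_one (w - 1), sub_add_cancel, prod_range_succ']
    push_cast
    simp only [show ∀ k : ℂ, w - 1 - (k + 1) = w - (k + 1 + 1) from fun k => by ring]
    ring

lemma prod_range_neg_natCast_add_one (n : ℕ) :
    ∏ k ∈ range n, (-((k : ℂ) + 1)) = (-1) ^ n * n ! := by
  rw [prod_neg, card_range]
  congr 1
  exact_mod_cast prod_range_add_one_eq_factorial n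

lemma hasDerivAt_prod_range_sub_natCast_add_one (n : ℕ) :
    HasDerivAt (fun w : ℂ => ∏ k ∈ range n, (w - (k + 1)))
      (-((-1) ^ n * n ! * harmonic n)) 0 := by
  induction n with
  | zero => simpa using hasDerivAt_const (0 : ℂ) (1 : ℂ)
  | succ n ih =>
    simp only [prod_range_succ]
    refine (ih.mul ((hasDerivAt_id 0).sub_const _)).congr_deriv ?_
    simp only [zero_sub, prod_range_neg_natCast_add_one, harmonic_succ, factorial_succ]
    push_cast
    field_simp
    ring

lemma hasDerivAt_inv_Gamma_add_one_zero :
    HasDerivAt (fun w : ℂ => (Gamma (w + 1))⁻¹) (Real.eulerMascheroniConstant : ℂ) 0 := by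
  have h : HasDerivAt (fun z => (Gamma z)⁻¹) (Real.eulerMascheroniConstant : ℂ) (0 + 1) := by
    simpa using hasDerivAt_Gamma_one.fun_inv (by simp)
  exact h.comp_add_const 0 1

/-- The entire function `w ↦ 1 / (w Γ(w - n))`. -/
noncomputable def invGammaSubNatDivSelf (n : ℕ) (w : ℂ) : ℂ :=
  (∏ k ∈ range n, (w - (k + 1))) * (Gamma (w + 1))⁻¹

lemma self_mul_invGammaSubNatDivSelf (n : ℕ) (w : ℂ) :
    w * invGammaSubNatDivSelf n w = (Gamma (w - n))⁻¹ := by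
  rw [invGammaSubNatDivSelf, inv_Gamma_sub_natCast,
    one_div_Gamma_eq_self_mul_one_div_Gamma_add_one w]
  ring

lemma differentiable_invGammaSubNatDivSelf (n : ℕ) : Differentiable ℂ (invGammaSubNatDivSelf n) :=
  (Differentiable.fun_finsetProd fun _ _ => differentiable_id.sub_const _).mul
    (differentiable_one_div_Gamma.comp (differentiable_id.add_const 1))

lemma invGammaSubNatDivSelf_zero (n : ℕ) : invGammaSubNatDivSelf n 0 = (-1) ^ n * n ! := by
  simp only [invGammaSubNatDivSelf, zero_sub, zero_add, Gamma_one, inv_one, mul_one]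
  exact prod_range_neg_natCast_add_one n

lemma hasDerivAt_invGammaSubNatDivSelf_zero (n : ℕ) :
    HasDerivAt (invGammaSubNatDivSelf n)
      ((-1) ^ n * n ! * ((Real.eulerMascheroniConstant : ℂ) - harmonic n)) 0 := by
  refine ((hasDerivAt_prod_range_sub_natCast_add_one n).mul
    hasDerivAt_inv_Gamma_add_one_zero).congr_deriv ?_
  simp only [zero_sub, zero_add, Gamma_one, inv_one, prod_range_neg_natCast_add_one]
  ring

theorem one_div_Gamma_linear_mul_cs_at_zero_general (a c : ℂ) (b : ℕ) :
    ∃ g : ℂ → ℂ, AnalyticAt ℂ g 0 ∧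
      (∀ᶠ s in nhdsWithin (0 : ℂ) {(0 : ℂ)}ᶜ,
        g s = (Complex.Gamma (a * s - b))⁻¹ / (c * s)) ∧
      g 0 = a / c * (-1) ^ b * (b.factorial : ℂ) ∧
      deriv g 0 = a ^ 2 / c * (-1) ^ b * (b.factorial : ℂ) *
        ((Real.eulerMascheroniConstant : ℂ) - ((harmonic b : ℚ) : ℂ)) := by
  refine ⟨fun s => a / c * invGammaSubNatDivSelf b (a * s), ?_, ?_, ?_, ?_⟩
  · exact (((differentiable_invGammaSubNatDivSelf b).comp
      (differentiable_id.const_mul a)).const_mul _).analyticAt 0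
  · refine eventually_nhdsWithin_of_forall fun s (hs : s ≠ 0) => ?_
    rw [← self_mul_invGammaSubNatDivSelf]
    field_simp
  · simp only [mul_zero, invGammaSubNatDivSelf_zero]
    ring
  · rw [deriv_const_mul_field, deriv_comp_mul_left, mul_zero,
      (hasDerivAt_invGammaSubNatDivSelf_zero b).deriv, smul_eq_mul]
    ring

/-- Let `Re a > 0`, `Re c > 0`, `b ∈ ℕ`. The function `s ↦ 1/(Γ(as-b)·cs)` extends
holomorphically near `s = 0` with value `(a/c)·(-1)^b·b!` and derivative
`(a²/c)·(-1)^b·b!·(γ - h_b)` at `0`. -/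
theorem one_div_Gamma_linear_mul_cs_at_zero (a c : ℂ) (ha : 0 < a.re) (hc : 0 < c.re) (b : ℕ) :
    ∃ g : ℂ → ℂ, AnalyticAt ℂ g 0 ∧
      (∀ᶠ s in nhdsWithin (0 : ℂ) {(0 : ℂ)}ᶜ,
        g s = (Complex.Gamma (a * s - b))⁻¹ / (c * s)) ∧
      g 0 = a / c * (-1) ^ b * (b.factorial : ℂ) ∧
      deriv g 0 = a ^ 2 / c * (-1) ^ b * (b.factorial : ℂ) *
        ((Real.eulerMascheroniConstant : ℂ) - ((harmonic b : ℚ) : ℂ)) :=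
  one_div_Gamma_linear_mul_cs_at_zero_general a c b
end

section
/- Let P ≥ 1 and let w_p = a_p/b_p (p = 1,...,P) be positive rationals with a_p, b_p coprime positive integers, and d_1,...,d_P complex with positive real part. Set w = lcm(a_1,...,a_P)/gcd(b_1,...,b_P) and β_p = w/w_p (each β_p is a positive integer). Then for Re(s) large, ζ^B(R, s, d | w_1,...,w_P) = w^{-s} ∏_{p=1}^P β_p^{R_p} · Σ_{0 ≤ k_1 ≤ β_1 - 1, ..., 0 ≤ k_P ≤ β_P - 1} ζ^B(R, s, ((d_p + k_p)/β_p)_{p=1}^P | 1,...,1). -/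
/-!
Write each summation index as `n_p = β_p m_p + k_p` with `0 ≤ k_p < β_p`. Because
`w_p β_p = w` for every `p`, the factors and the linear form of a summand become
`n_p + d_p = β_p (m_p + (d_p + k_p)/β_p)` and `Σ_p w_p (n_p + d_p) = w Σ_p (m_p + (d_p + k_p)/β_p)`,
so the summand is `w^{-s} ∏_p β_p^{R_p}` times a summand of the unit-coefficient function with
shifts `(d_p + k_p)/β_p`, and `(w z)^{-s} = w^{-s} z^{-s}` since `w > 0`. The rearrangement is
justified by absolute convergence: a summand is `O(∏_p (n_p + 1)^{-q})` with
`q = (Re s - Σ_p R_p)/P > 1`, because `(Σ_p (n_p + 1))^P ≥ ∏_p (n_p + 1)`.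
-/

open Finset

namespace Complex

lemma ofReal_mul_cpow {r : ℝ} (hr : 0 ≤ r) (z s : ℂ) :
    ((r : ℂ) * z) ^ s = (r : ℂ) ^ s * z ^ s := by
  rcases hr.eq_or_lt with rfl | hr
  · rcases eq_or_ne s 0 with rfl | hs <;> simp [zero_cpow, *]
  rcases eq_or_ne z 0 with rfl | hz
  · rcases eq_or_ne s 0 with rfl | hs <;> simp [zero_cpow, *]
  have hr' : (r : ℂ) ≠ 0 := ofReal_ne_zero.2 hr.ne'
  rw [cpow_def_of_ne_zero (mul_ne_zero hr' hz), cpow_def_of_ne_zero hr', cpow_def_of_ne_zero hz,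
    log_ofReal_mul hr hz, ofReal_log hr.le, add_mul, exp_add]

lemma norm_cpow_neg_le {z s : ℂ} {t : ℝ} (ht : 0 < t) (hz : t ≤ z.re) (hs : 0 ≤ s.re) :
    ‖z ^ (-s)‖ ≤ t ^ (-s.re) * Real.exp (Real.pi * |s.im|) := by
  have harg : arg z * s.im ≤ Real.pi * |s.im| := by
    calc arg z * s.im ≤ |arg z| * |s.im| := by rw [← abs_mul]; exact le_abs_self _
      _ ≤ Real.pi * |s.im| := by gcongr; exact abs_arg_le_pi z
  calc ‖z ^ (-s)‖ ≤ ‖z‖ ^ (-s).re / Real.exp (arg z * (-s).im) := norm_cpow_le _ _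
    _ = ‖z‖ ^ (-s.re) * Real.exp (arg z * s.im) := by
        rw [div_eq_mul_inv, ← Real.exp_neg, neg_re, neg_im, mul_neg, neg_neg]
    _ ≤ t ^ (-s.re) * Real.exp (Real.pi * |s.im|) :=
        mul_le_mul (Real.rpow_le_rpow_of_nonpos ht (hz.trans (re_le_norm z)) (neg_nonpos.2 hs))
          (Real.exp_le_exp.2 harg) (Real.exp_pos _).le (Real.rpow_nonneg ht.le _)

lemma norm_natCast_add_le (n : ℕ) (z : ℂ) : ‖(n : ℂ) + z‖ ≤ (1 + ‖z‖) * ((n : ℝ) + 1) := by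
  calc ‖(n : ℂ) + z‖ ≤ n + ‖z‖ := by simpa using norm_add_le (n : ℂ) z
    _ ≤ (1 + ‖z‖) * ((n : ℝ) + 1) := by nlinarith [norm_nonneg z, (n.cast_nonneg : (0 : ℝ) ≤ n)]

end Complex

variable {ι : Type*} [Fintype ι]

lemma summable_pi_prod_of_nonneg {α : Type*} {g : ι → α → ℝ} (hg0 : ∀ i a, 0 ≤ g i a)
    (hg : ∀ i, Summable (g i)) : Summable fun x : ι → α => ∏ i, g i (x i) := by
  classical
  refine summable_of_sum_le (c := ∏ i, ∑' a, g i a)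
    (fun x => prod_nonneg fun i _ => hg0 i _) fun u => ?_
  calc ∑ x ∈ u, ∏ i, g i (x i) ≤ ∑ x ∈ Fintype.piFinset fun i => u.image (· i), ∏ i, g i (x i) :=
        sum_le_sum_of_subset_of_nonneg
          (fun x hx => Fintype.mem_piFinset.2 fun i => mem_image_of_mem _ hx)
          fun x _ _ => prod_nonneg fun i _ => hg0 i _
    _ = ∏ i, ∑ a ∈ u.image (· i), g i a := (prod_univ_sum _ _).symm
    _ ≤ ∏ i, ∑' a, g i a := prod_le_prod (fun i _ => sum_nonneg fun a _ => hg0 i a)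
          fun i _ => (hg i).sum_le_tsum _ fun a _ => hg0 i a

lemma prod_pow_mul_rpow_neg_le [Nonempty ι] {x : ι → ℝ} {N σ : ℝ} (hx : ∀ i, 0 < x i)
    (hxN : ∀ i, x i ≤ N) (R : ι → ℕ) (hσ : ∑ i, (R i : ℝ) ≤ σ) :
    (∏ i, x i ^ R i) * N ^ (-σ) ≤ ∏ i, x i ^ (-((σ - ∑ i, (R i : ℝ)) / Fintype.card ι)) := by
  set q := (σ - ∑ i, (R i : ℝ)) / Fintype.card ι
  obtain ⟨i₀⟩ := ‹Nonempty ι›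
  have hN : 0 < N := (hx i₀).trans_le (hxN i₀)
  calc (∏ i, x i ^ R i) * N ^ (-σ) ≤ (∏ i, N ^ R i) * N ^ (-σ) := by
        refine mul_le_mul_of_nonneg_right ?_ (Real.rpow_nonneg hN.le _)
        exact prod_le_prod (fun i _ => pow_nonneg (hx i).le _)
          fun i _ => pow_le_pow_left₀ (hx i).le (hxN i) _
    _ = ∏ _i : ι, N ^ (-q) := by
        rw [prod_const, card_univ, ← Real.rpow_natCast, ← Real.rpow_mul hN.le, prod_pow_eq_pow_sum,
          ← Real.rpow_natCast, ← Real.rpow_add hN]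
        congr 1
        simp only [q]
        push_cast
        field_simp
        ring
    _ ≤ ∏ i, x i ^ (-q) := by
        refine prod_le_prod (fun i _ => Real.rpow_nonneg hN.le _) fun i _ => ?_
        exact Real.rpow_le_rpow_of_nonpos (hx i) (hxN i)
          (neg_nonpos.2 (div_nonneg (sub_nonneg.2 hσ) (Nat.cast_nonneg _)))

/-- The summand of `ζ^B(R, s, d | c)`. -/
noncomputable def barnesTerm (R : ι → ℕ) (s : ℂ) (c d : ι → ℂ) (n : ι → ℕ) : ℂ :=
  (∏ p, ((n p : ℂ) + d p) ^ R p) * (∑ p, c p * ((n p : ℂ) + d p)) ^ (-s)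

/-- `ζ^B(R, s, d | c)`; as a `tsum` it is `0` outside the region of absolute convergence. -/
noncomputable def barnesZeta (R : ι → ℕ) (s : ℂ) (c d : ι → ℂ) : ℂ :=
  ∑' n, barnesTerm R s c d n

section Convergence

variable {R : ι → ℕ} {s : ℂ} {c : ι → ℝ} {d : ι → ℂ}

lemma norm_barnesTerm_le [Nonempty ι] (hc : ∀ p, 0 ≤ c p) {ε : ℝ} (hε : 0 < ε)
    (hεc : ∀ p, ε ≤ c p * min (d p).re 1) (hs : ∑ p, (R p : ℝ) ≤ s.re) (n : ι → ℕ) :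
    ‖barnesTerm R s (fun p => c p) d n‖ ≤
      (∏ p, (1 + ‖d p‖) ^ R p) * ε ^ (-s.re) * Real.exp (Real.pi * |s.im|) *
        ∏ p, ((n p : ℝ) + 1) ^ (-((s.re - ∑ p, (R p : ℝ)) / Fintype.card ι)) := by
  set x : ι → ℝ := fun p => (n p : ℝ) + 1
  set N := ∑ p, x p
  have hx (p) : 0 < x p := by positivity
  have hxN (p) : x p ≤ N := single_le_sum (fun p _ => (hx p).le) (mem_univ p)
  have hre : ε * N ≤ (∑ p, (c p : ℂ) * ((n p : ℂ) + d p)).re := by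
    simp only [N, mul_sum, Complex.re_sum, Complex.re_ofReal_mul, Complex.add_re,
      Complex.natCast_re]
    refine sum_le_sum fun p _ => ?_
    calc ε * x p ≤ c p * min (d p).re 1 * x p := mul_le_mul_of_nonneg_right (hεc p) (hx p).le
      _ ≤ c p * ((n p : ℝ) + (d p).re) := by
        rw [mul_assoc]
        refine mul_le_mul_of_nonneg_left ?_ (hc p)
        nlinarith [min_le_left (d p).re 1, min_le_right (d p).re 1, (n p).cast_nonneg (α := ℝ)]
  have hnum : ∏ p, ‖(n p : ℂ) + d p‖ ^ R p ≤ (∏ p, (1 + ‖d p‖) ^ R p) * ∏ p, x p ^ R p := by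
    rw [← prod_mul_distrib]
    refine prod_le_prod (fun p _ => by positivity) fun p _ => ?_
    rw [← mul_pow]
    exact pow_le_pow_left₀ (norm_nonneg _) (Complex.norm_natCast_add_le _ _) _
  have hN : 0 < N := (hx _).trans_le (hxN (Classical.arbitrary ι))
  have hden := Complex.norm_cpow_neg_le (mul_pos hε hN) hre
    ((sum_nonneg fun p _ => (R p).cast_nonneg).trans hs)
  rw [Real.mul_rpow hε.le hN.le] at hden
  calc ‖barnesTerm R s (fun p => c p) d n‖
      = (∏ p, ‖(n p : ℂ) + d p‖ ^ R p) * ‖(∑ p, (c p : ℂ) * ((n p : ℂ) + d p)) ^ (-s)‖ := by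
        simp [barnesTerm, norm_prod]
    _ ≤ ((∏ p, (1 + ‖d p‖) ^ R p) * ∏ p, x p ^ R p) *
          (ε ^ (-s.re) * N ^ (-s.re) * Real.exp (Real.pi * |s.im|)) :=
        mul_le_mul hnum hden (norm_nonneg _) (by positivity)
    _ = (∏ p, (1 + ‖d p‖) ^ R p) * ε ^ (-s.re) * Real.exp (Real.pi * |s.im|) *
          ((∏ p, x p ^ R p) * N ^ (-s.re)) := by ring
    _ ≤ _ := by
        gcongr
        exact prod_pow_mul_rpow_neg_le hx hxN R hs

theorem summable_barnesTerm (hc : ∀ p, 0 < c p) (hd : ∀ p, 0 < (d p).re)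
    (hs : ∑ p, (R p : ℝ) + Fintype.card ι < s.re) :
    Summable (barnesTerm R s (fun p => c p) d) := by
  cases isEmpty_or_nonempty ι
  · exact .of_finite
  set q := (s.re - ∑ p, (R p : ℝ)) / Fintype.card ι
  have hq : 1 < q := by
    rw [one_lt_div (by positivity)]; linarith
  obtain ⟨p₀, hp₀⟩ := Finite.exists_min fun p => c p * min (d p).re 1
  have hε : 0 < c p₀ * min (d p₀).re 1 := mul_pos (hc p₀) (lt_min (hd p₀) one_pos)
  have hg : Summable fun m : ℕ => ((m : ℝ) + 1) ^ (-q) := by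
    simpa using (summable_nat_add_iff 1).2 (Real.summable_nat_rpow.2 (neg_lt_neg hq))
  have hRs : ∑ p, (R p : ℝ) ≤ s.re := by linarith [(Fintype.card ι).cast_nonneg (α := ℝ)]
  exact .of_norm_bounded
    ((summable_pi_prod_of_nonneg (fun _ m => by positivity) fun _ => hg).mul_left _)
    (norm_barnesTerm_le (fun p => (hc p).le) hε hp₀ hRs)

end Convergence

section Reduction

variable {E : Type*} [NormedAddCommGroup E] [CompleteSpace E]

def piDivModEquiv (β : ι → ℕ) [∀ p, NeZero (β p)] : (ι → ℕ) ≃ (∀ p, Fin (β p)) × (ι → ℕ) :=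
  ((Equiv.piCongrRight fun p => Nat.divModEquiv (β p)).trans
    (Equiv.arrowProdEquivProdArrow _ _ _)).trans (Equiv.prodComm _ _)

theorem Summable.tsum_eq_sum_tsum_mul_add [DecidableEq ι] {β : ι → ℕ} [∀ p, NeZero (β p)]
    {f : (ι → ℕ) → E} (hf : Summable f) :
    ∑' n, f n = ∑ k : ∀ p, Fin (β p), ∑' m : ι → ℕ, f fun p => m p * β p + k p := by
  rw [← (piDivModEquiv β).symm.tsum_eq]
  exact (((piDivModEquiv β).symm.summable_iff.2 hf).tsum_prod).trans (tsum_fintype _)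

lemma Finset.sum_piFinset_range [DecidableEq ι] {M : Type*} [AddCommMonoid M] (β : ι → ℕ)
    (g : (ι → ℕ) → M) :
    ∑ k ∈ Fintype.piFinset fun p => range (β p), g k = ∑ k : ∀ p, Fin (β p), g fun p => k p :=
  sum_bij' (fun k hk p => ⟨k p, mem_range.1 (Fintype.mem_piFinset.1 hk p)⟩) (fun k _ p => k p)
    (fun _ _ => mem_univ _) (fun k _ => Fintype.mem_piFinset.2 fun p => mem_range.2 (k p).isLt)
    (fun _ _ => rfl) (fun _ _ => rfl) (fun _ _ => rfl)

variable {R : ι → ℕ} {s : ℂ} {c d : ι → ℂ} {β : ι → ℕ} {w : ℝ}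

lemma barnesTerm_mul_add (hβ : ∀ p, β p ≠ 0) (hw : 0 ≤ w) (hcβ : ∀ p, c p * β p = w)
    (k m : ι → ℕ) :
    barnesTerm R s c d (fun p => m p * β p + k p) =
      (w : ℂ) ^ (-s) * (∏ p, (β p : ℂ) ^ R p) *
        barnesTerm R s 1 (fun p => (d p + k p) / β p) m := by
  have hsplit (p) : ((m p * β p + k p : ℕ) : ℂ) + d p = β p * (m p + (d p + k p) / β p) := by
    have : (β p : ℂ) ≠ 0 := Nat.cast_ne_zero.2 (hβ p)
    push_cast
    field_simp
    ring
  have hform : ∑ p, c p * (((m p * β p + k p : ℕ) : ℂ) + d p) =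
      w * ∑ p, (1 : ι → ℂ) p * (m p + (d p + k p) / β p) := by
    simp only [hsplit, ← mul_assoc, hcβ, Pi.one_apply, one_mul, mul_sum]
  simp only [barnesTerm]
  rw [hform, Complex.ofReal_mul_cpow hw]
  simp only [hsplit, mul_pow, prod_mul_distrib]
  ring

theorem barnesZeta_eq_sum_piFinset [DecidableEq ι] [∀ p, NeZero (β p)] (hw : 0 ≤ w)
    (hcβ : ∀ p, c p * β p = w) (hsum : Summable (barnesTerm R s c d)) :
    barnesZeta R s c d = (w : ℂ) ^ (-s) * (∏ p, (β p : ℂ) ^ R p) *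
      ∑ k ∈ Fintype.piFinset fun p => range (β p),
        barnesZeta R s 1 fun p => (d p + k p) / β p := by
  rw [barnesZeta, hsum.tsum_eq_sum_tsum_mul_add (β := β), sum_piFinset_range, mul_sum]
  refine sum_congr rfl fun k _ => ?_
  simp only [barnesTerm_mul_add (fun p => NeZero.ne (β p)) hw hcβ, barnesZeta, tsum_mul_left]

end Reduction

theorem generalized_barnes_zeta_rational_reduction_general (P : ℕ)
    (R : Fin P → ℕ) (d : Fin P → ℂ) (hd : ∀ p, 0 < (d p).re)
    (a b : Fin P → ℕ) (ha : ∀ p, 0 < a p) (hb : ∀ p, 0 < b p)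
    (w : ℚ) (hw : w = ((Finset.univ.lcm a : ℕ) : ℚ) / ((Finset.univ.gcd b : ℕ) : ℚ))
    (β : Fin P → ℕ) (hβ : ∀ p, ((β p : ℚ)) = w / ((a p : ℚ) / (b p : ℚ)))
    (s : ℂ) (hs : ((∑ p, R p : ℕ) : ℝ) + P < s.re) :
    (∑' n : Fin P → ℕ,
        (∏ p, ((n p : ℂ) + d p) ^ (R p)) *
          (∑ p, ((a p : ℂ) / (b p : ℂ)) * ((n p : ℂ) + d p)) ^ (-s))
    = ((w : ℂ)) ^ (-s) * (∏ p, ((β p : ℂ)) ^ (R p)) *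
        ∑ k ∈ Fintype.piFinset (fun p => Finset.range (β p)),
          ∑' n : Fin P → ℕ,
            (∏ p, ((n p : ℂ) + (d p + (k p : ℂ)) / (β p : ℂ)) ^ (R p)) *
              (∑ p, ((n p : ℂ) + (d p + (k p : ℂ)) / (β p : ℂ))) ^ (-s) := by
  have hw_pos (p : Fin P) : 0 < w := by
    have hlcm : univ.lcm a ≠ 0 := by simp [Finset.lcm_eq_zero_iff, (ha _).ne']
    have hgcd : univ.gcd b ≠ 0 := fun h => (hb p).ne' (Finset.gcd_eq_zero_iff.1 h p (mem_univ p))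
    rw [hw]
    positivity
  have hcβ (p : Fin P) : (a p : ℚ) / b p * β p = w := by
    have := ha p; have := hb p
    rw [hβ p]; field_simp
  have : ∀ p, NeZero (β p) := fun p => ⟨by
    have := ha p; have := hb p; have := hw_pos p
    exact_mod_cast (show (β p : ℚ) ≠ 0 by rw [hβ p]; positivity)⟩
  have hsum := summable_barnesTerm (R := R) (s := s) (c := fun p => (a p : ℝ) / b p) (d := d)
    (fun p => by have := ha p; have := hb p; positivity) hd (by simpa using hs)
  have key := barnesZeta_eq_sum_piFinset (c := fun p => (a p : ℂ) / b p) (β := β) (w := w)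
    (by rw [hw]; positivity) (fun p => by simpa using congrArg ((↑) : ℚ → ℂ) (hcβ p))
    (by simpa using hsum)
  simpa [barnesZeta, barnesTerm] using key

/-- Reduction of the generalized Barnes zeta function with positive rational coefficients
`w_p = a_p / b_p` (`a_p, b_p` coprime positive integers) to the all-ones case.
With `w = lcm(a_1,…,a_P)/gcd(b_1,…,b_P)` and `β_p = w / w_p` (a positive integer), for `Re s`
large:
`ζ^B(R,s,d|w) = w^{-s} ∏_p β_p^{R_p} Σ_{0 ≤ k_p ≤ β_p - 1}
  ζ^B(R,s,((d_p+k_p)/β_p)_p | 1,…,1)`. -/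
theorem generalized_barnes_zeta_rational_reduction (P : ℕ) (hP : 1 ≤ P)
    (R : Fin P → ℕ) (d : Fin P → ℂ) (hd : ∀ p, 0 < (d p).re)
    (a b : Fin P → ℕ) (ha : ∀ p, 0 < a p) (hb : ∀ p, 0 < b p)
    (hab : ∀ p, Nat.Coprime (a p) (b p))
    (w : ℚ) (hw : w = ((Finset.univ.lcm a : ℕ) : ℚ) / ((Finset.univ.gcd b : ℕ) : ℚ))
    (β : Fin P → ℕ) (hβ : ∀ p, ((β p : ℚ)) = w / ((a p : ℚ) / (b p : ℚ)))
    (s : ℂ) (hs : ((∑ p, R p : ℕ) : ℝ) + P < s.re) :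
    (∑' n : Fin P → ℕ,
        (∏ p, ((n p : ℂ) + d p) ^ (R p)) *
          (∑ p, ((a p : ℂ) / (b p : ℂ)) * ((n p : ℂ) + d p)) ^ (-s))
    = ((w : ℂ)) ^ (-s) * (∏ p, ((β p : ℂ)) ^ (R p)) *
        ∑ k ∈ Fintype.piFinset (fun p => Finset.range (β p)),
          ∑' n : Fin P → ℕ,
            (∏ p, ((n p : ℂ) + (d p + (k p : ℂ)) / (β p : ℂ)) ^ (R p)) *
              (∑ p, ((n p : ℂ) + (d p + (k p : ℂ)) / (β p : ℂ))) ^ (-s) :=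
  generalized_barnes_zeta_rational_reduction_general P R d hd a b ha hb w hw β hβ s hs
end
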